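/- Conversely, if (μ_n, f_n) → (μ, f) in TL^q with μ absolutely continuous with respect to Lebesgue measure, then for every stagnating sequence of transportation maps T_n with (T_n)_# μ = μ_n one has ∫ |f(x) − f_n(T_n(x))|^q dμ(x) → 0. -/

import Mathlib

open MeasureTheory Filter Topology

/-- The set of couplings (transportation plans) between two measures on `ℝ/Lℤ`. -/
def couplings (L : ℝ) (μ ν : Measure (AddCircle L)) :
    Set (Measure (AddCircle L × AddCircle L)) :=
  {π | IsProbabilityMeasure π ∧ π.map Prod.fst = μ ∧ π.map Prod.snd = ν}

/-- The `TL^q` transportation distance between `(μ,f)` and `(ν,g)`. -/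
noncomputable def dTL (L q : ℝ) (μ ν : Measure (AddCircle L))
    (f g : AddCircle L → ℝ) : ℝ :=
  sInf {r : ℝ | ∃ π ∈ couplings L μ ν,
    r = (∫ z : AddCircle L × AddCircle L,
      (‖z.1 - z.2‖ ^ q + |f z.1 - g z.2| ^ q) ∂π) ^ (1 / q)}

/-- Weak convergence of measures on the circle. -/
def WeakConv (L : ℝ) (μn : ℕ → Measure (AddCircle L)) (μ : Measure (AddCircle L)) : Prop :=
  ∀ φ : AddCircle L → ℝ, Continuous φ →
    Tendsto (fun n => ∫ x, φ x ∂(μn n)) atTop (𝓝 (∫ x, φ x ∂μ))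

open scoped ENNReal BoundedContinuousFunction

/-!
Choose couplings `π_n` of `μ_n` and `μ` whose `TL^q` cost tends to `0`, and approximate `f` in
`L^q(μ)` by a bounded continuous `g`. Transporting `g ∘ T_n - f_n ∘ T_n` through
`(T_n)_# μ = μ_n = (π_n)_1`, the triangle inequality bounds `‖f - f_n ∘ T_n‖_{L^q(μ)}` by
`2 ‖f - g‖_{L^q(μ)}` plus the `L^q` norms of `g(x) - g(T_n x)` under `μ`, of `g(x) - g(y)`
under `π_n`, and of `f_n(x) - f(y)` under `π_n`. The last is controlled by the cost of `π_n`;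
the other two tend to `0` because `g` is bounded and uniformly continuous, so that
`|g x - g y| ≤ ε + K_ε d(x, y)`, while the displacements `d(x, T_n x)` under `μ` and `d(x, y)`
under `π_n` tend to `0` in `L^q`.
-/

namespace ENNReal

theorem tendsto_nhds_zero_of_forall_le_ofReal_add {ι : Type*} {l : Filter ι} {a : ι → ℝ≥0∞}
    (h : ∀ ε : ℝ, 0 < ε → ∃ b : ι → ℝ≥0∞, Tendsto b l (𝓝 0) ∧
      ∀ᶠ i in l, a i ≤ .ofReal ε + b i) :
    Tendsto a l (𝓝 0) := by
  rw [ENNReal.tendsto_nhds_zero]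
  intro ε hε
  obtain ⟨r, -, hr0, hrε⟩ := lt_iff_exists_real_btwn.mp (ENNReal.half_pos hε.ne')
  obtain ⟨b, hb, hab⟩ := h r (ofReal_pos.mp hr0)
  filter_upwards [hab, ENNReal.tendsto_nhds_zero.mp hb _ (ENNReal.half_pos hε.ne')]
    with i hai hbi
  calc a i ≤ ε / 2 + ε / 2 := hai.trans (add_le_add hrε.le hbi)
    _ = ε := ENNReal.add_halves ε

end ENNReal

namespace BoundedContinuousFunction

variable {X E : Type*} [PseudoMetricSpace X] [PseudoMetricSpace E]

/-- Uniform continuity handles nearby points, boundedness handles the rest. -/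
theorem exists_dist_le_add_mul_dist (g : X →ᵇ E) (hg : UniformContinuous g) {ε : ℝ}
    (hε : 0 < ε) : ∃ K : ℝ, ∀ x y, dist (g x) (g y) ≤ ε + K * dist x y := by
  obtain ⟨δ, hδ, hgδ⟩ := Metric.uniformContinuous_iff.mp hg ε hε
  obtain ⟨C, hC⟩ := g.bounded
  refine ⟨C / δ, fun x y => ?_⟩
  have hC0 : 0 ≤ C := dist_self (g x) ▸ hC x x
  rcases lt_or_ge (dist x y) δ with hxy | hxy
  · nlinarith [hgδ hxy, dist_nonneg (x := x) (y := y), div_nonneg hC0 hδ.le]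
  · calc dist (g x) (g y) ≤ C / δ * δ := by rw [div_mul_cancel₀ C hδ.ne']; exact hC x y
      _ ≤ ε + C / δ * dist x y := by nlinarith [div_nonneg hC0 hδ.le]

end BoundedContinuousFunction

section

variable {X β E ι : Type*} [PseudoMetricSpace X] [MeasurableSpace β] [NormedAddCommGroup E]

theorem tendsto_eLpNorm_comp_sub_comp {l : Filter ι} {p : ℝ≥0∞} (hp : 1 ≤ p)
    {ν : ι → Measure β} [∀ i, IsProbabilityMeasure (ν i)]
    (g : X →ᵇ E) (hg : UniformContinuous g) {u v : ι → β → X}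
    (huv : ∀ i, AEStronglyMeasurable (fun b => dist (u i b) (v i b)) (ν i))
    (h : Tendsto (fun i => eLpNorm (fun b => dist (u i b) (v i b)) p (ν i)) l (𝓝 0)) :
    Tendsto (fun i => eLpNorm (fun b => g (u i b) - g (v i b)) p (ν i)) l (𝓝 0) := by
  refine ENNReal.tendsto_nhds_zero_of_forall_le_ofReal_add fun ε hε => ?_
  obtain ⟨K, hK⟩ := g.exists_dist_le_add_mul_dist hg hε
  refine ⟨fun i => ‖K‖ₑ * eLpNorm (fun b => dist (u i b) (v i b)) p (ν i),
    by simpa using ENNReal.Tendsto.const_mul h (Or.inr enorm_ne_top), .of_forall fun i => ?_⟩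
  calc eLpNorm (fun b => g (u i b) - g (v i b)) p (ν i)
      ≤ eLpNorm ((fun _ => ε) + K • fun b => dist (u i b) (v i b)) p (ν i) :=
        eLpNorm_mono_real fun b => by rw [← dist_eq_norm]; exact hK _ _
    _ ≤ eLpNorm (fun _ => ε) p (ν i) + eLpNorm (K • fun b => dist (u i b) (v i b)) p (ν i) :=
        eLpNorm_add_le aestronglyMeasurable_const ((huv i).const_smul K) hp
    _ ≤ ENNReal.ofReal ε + ‖K‖ₑ * eLpNorm (fun b => dist (u i b) (v i b)) p (ν i) := by
        refine add_le_add ?_ eLpNorm_const_smul_le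
        refine (eLpNorm_le_of_ae_bound (C := ε) (.of_forall fun _ => ?_)).trans_eq ?_
        · exact (Real.norm_of_nonneg hε.le).le
        · rw [measure_univ, ENNReal.one_rpow, one_mul]

end

section Lp

variable {α E ι : Type*} [MeasurableSpace α] [NormedAddCommGroup E]

theorem eLpNorm_ofReal_rpow_eq_ofReal_integral {q : ℝ} (hq : 0 < q) {ν : Measure α} {F : α → E}
    (hF : MemLp F (ENNReal.ofReal q) ν) :
    eLpNorm F (ENNReal.ofReal q) ν ^ q = ENNReal.ofReal (∫ a, ‖F a‖ ^ q ∂ν) := by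
  have hI : 0 ≤ ∫ a, ‖F a‖ ^ q ∂ν := integral_nonneg fun _ => by positivity
  rw [hF.eLpNorm_eq_integral_rpow_norm (by simpa using hq) ENNReal.ofReal_ne_top,
    ENNReal.toReal_ofReal hq.le, ENNReal.ofReal_rpow_of_nonneg (by positivity) hq.le,
    Real.rpow_inv_rpow hI hq.ne']

theorem tendsto_eLpNorm_nhds_zero_iff_integral_norm_rpow {l : Filter ι} {q : ℝ} (hq : 0 < q)
    {ν : ι → Measure α} {F : ι → α → E} (hF : ∀ i, MemLp (F i) (ENNReal.ofReal q) (ν i)) :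
    Tendsto (fun i => eLpNorm (F i) (ENNReal.ofReal q) (ν i)) l (𝓝 0) ↔
      Tendsto (fun i => ∫ a, ‖F i a‖ ^ q ∂ν i) l (𝓝 0) := by
  rw [(ENNReal.orderIsoRpow q hq).toHomeomorph.isEmbedding.tendsto_nhds_iff]
  simp only [Function.comp_def, OrderIso.coe_toHomeomorph, ENNReal.orderIsoRpow_apply,
    ENNReal.zero_rpow_of_pos hq, eLpNorm_ofReal_rpow_eq_ofReal_integral hq (hF _)]
  rw [← ENNReal.tendsto_toReal_iff (fun _ => ENNReal.ofReal_ne_top) ENNReal.zero_ne_top]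
  have hI : ∀ i, 0 ≤ ∫ a, ‖F i a‖ ^ q ∂ν i := fun i => integral_nonneg fun _ => by positivity
  simp only [ENNReal.toReal_zero, ENNReal.toReal_ofReal (hI _)]

end Lp

section Coupling

variable {X E : Type*} [MeasurableSpace X] [NormedAddCommGroup E] {p : ℝ≥0∞}

theorem eLpNorm_sub_le_eLpNorm_sub_add {μ : Measure X} (hp : 1 ≤ p) {a b c : X → E}
    (ha : AEStronglyMeasurable a μ) (hb : AEStronglyMeasurable b μ)
    (hc : AEStronglyMeasurable c μ) :
    eLpNorm (fun x => a x - c x) p μ ≤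
      eLpNorm (fun x => a x - b x) p μ + eLpNorm (fun x => b x - c x) p μ := by
  calc eLpNorm (fun x => a x - c x) p μ
      = eLpNorm ((fun x => a x - b x) + fun x => b x - c x) p μ := by
        simp only [Pi.add_def, sub_add_sub_cancel]
    _ ≤ _ := eLpNorm_add_le (ha.sub hb) (hb.sub hc) hp

theorem eLpNorm_comp_eq_of_map_eq {Y Z : Type*} [MeasurableSpace Y] [MeasurableSpace Z]
    {μ : Measure X} {ν : Measure Y} {S : X → Z} {R : Y → Z} (hS : AEMeasurable S μ)
    (hR : AEMeasurable R ν) (hSR : μ.map S = ν.map R) {F : Z → E}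
    (hF : AEStronglyMeasurable F (ν.map R)) :
    eLpNorm (fun x => F (S x)) p μ = eLpNorm (fun y => F (R y)) p ν := by
  calc eLpNorm (fun x => F (S x)) p μ = eLpNorm F p (μ.map S) :=
        (eLpNorm_map_measure (hSR ▸ hF) hS).symm
    _ = eLpNorm F p (ν.map R) := by rw [hSR]
    _ = _ := eLpNorm_map_measure hF hR

theorem eLpNorm_sub_comp_le_of_coupling (hp : 1 ≤ p) {μ : Measure X} {π : Measure (X × X)}
    {T : X → X} (hT : Measurable T) (hπ₁ : π.map Prod.fst = μ.map T)
    (hπ₂ : π.map Prod.snd = μ) {f g h : X → E} (hf : AEStronglyMeasurable f μ)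
    (hg : StronglyMeasurable g) (hh : AEStronglyMeasurable h (μ.map T)) :
    eLpNorm (fun x => f x - h (T x)) p μ ≤
      2 * eLpNorm (fun x => f x - g x) p μ + eLpNorm (fun x => g x - g (T x)) p μ +
        eLpNorm (fun z : X × X => g z.1 - g z.2) p π +
        eLpNorm (fun z : X × X => h z.1 - f z.2) p π := by
  have hfπ : AEStronglyMeasurable f (π.map Prod.snd) := hπ₂ ▸ hf
  have hhπ : AEStronglyMeasurable h (π.map Prod.fst) := hπ₁ ▸ hh
  have hg' : ∀ {ν : Measure X}, AEStronglyMeasurable g ν := hg.aestronglyMeasurable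
  have hT_side : eLpNorm (fun x => g (T x) - h (T x)) p μ =
      eLpNorm (fun z : X × X => g z.1 - h z.1) p π :=
    eLpNorm_comp_eq_of_map_eq (F := g - h) hT.aemeasurable measurable_fst.aemeasurable
      hπ₁.symm (hg'.sub hhπ)
  have hsnd_side :
      eLpNorm (fun z : X × X => g z.2 - f z.2) p π = eLpNorm (fun x => f x - g x) p μ :=
    (eLpNorm_comp_eq_of_map_eq (F := g - f) (R := id) measurable_snd.aemeasurable
      aemeasurable_id (by rw [hπ₂, Measure.map_id])
      (by rw [Measure.map_id]; exact hg'.sub hf)).trans (eLpNorm_sub_comm _ _ _ _)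
  have hgT : AEStronglyMeasurable (fun x => g (T x)) μ := hg'.comp_measurable hT
  have hhT : AEStronglyMeasurable (fun x => h (T x)) μ := hh.comp_measurable hT
  have hg₁ : AEStronglyMeasurable (fun z : X × X => g z.1) π := hg'.comp_measurable measurable_fst
  have hg₂ : AEStronglyMeasurable (fun z : X × X => g z.2) π := hg'.comp_measurable measurable_snd
  have hf₂ : AEStronglyMeasurable (fun z : X × X => f z.2) π := hfπ.comp_measurable measurable_snd
  have hh₁ : AEStronglyMeasurable (fun z : X × X => h z.1) π := hhπ.comp_measurable measurable_fst
  calc eLpNorm (fun x => f x - h (T x)) p μ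
      ≤ eLpNorm (fun x => f x - g x) p μ + (eLpNorm (fun x => g x - g (T x)) p μ +
          eLpNorm (fun z : X × X => g z.1 - h z.1) p π) := by
        rw [← hT_side]
        refine (eLpNorm_sub_le_eLpNorm_sub_add hp hf hg' hhT).trans ?_
        gcongr
        exact eLpNorm_sub_le_eLpNorm_sub_add hp hg' hgT hhT
    _ ≤ eLpNorm (fun x => f x - g x) p μ + (eLpNorm (fun x => g x - g (T x)) p μ +
          (eLpNorm (fun z : X × X => g z.1 - g z.2) p π +
            (eLpNorm (fun z : X × X => g z.2 - f z.2) p π +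
              eLpNorm (fun z : X × X => f z.2 - h z.1) p π))) := by
        gcongr
        refine (eLpNorm_sub_le_eLpNorm_sub_add hp hg₁ hg₂ hh₁).trans ?_
        gcongr
        exact eLpNorm_sub_le_eLpNorm_sub_add hp hg₂ hf₂ hh₁
    _ = _ := by
        rw [hsnd_side, show eLpNorm (fun z : X × X => f z.2 - h z.1) p π =
          eLpNorm (fun z : X × X => h z.1 - f z.2) p π from eLpNorm_sub_comm _ _ _ _]
        ring

end Coupling

section TLCost

variable {L q : ℝ} {μ ν : Measure (AddCircle L)} {π : Measure (AddCircle L × AddCircle L)}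

/-- `dTL L q μ ν f g` is by definition the infimum of `tlCost L q f g π ^ (1 / q)` over
`π ∈ couplings L μ ν`. -/
noncomputable def tlCost (L q : ℝ) (f g : AddCircle L → ℝ)
    (π : Measure (AddCircle L × AddCircle L)) : ℝ :=
  ∫ z, (‖z.1 - z.2‖ ^ q + |f z.1 - g z.2| ^ q) ∂π

theorem tlCost_nonneg (f g : AddCircle L → ℝ) (π : Measure (AddCircle L × AddCircle L)) :
    0 ≤ tlCost L q f g π :=
  integral_nonneg fun _ => by positivity

theorem map_prodMk_mem_couplings [IsProbabilityMeasure μ]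
    {T : AddCircle L → AddCircle L} (hT : Measurable T) :
    μ.map (fun x => (T x, x)) ∈ couplings L (μ.map T) μ := by
  have hγ : Measurable fun x => (T x, x) := hT.prodMk measurable_id
  refine ⟨Measure.isProbabilityMeasure_map hγ.aemeasurable, ?_, ?_⟩
  · rw [Measure.map_map measurable_fst hγ]; rfl
  · rw [Measure.map_map measurable_snd hγ]; exact Measure.map_id

theorem exists_mem_couplings_tendsto_tlCost (hq : 0 < q)
    {μn : ℕ → Measure (AddCircle L)} {f : AddCircle L → ℝ} {fn : ℕ → AddCircle L → ℝ}
    (hne : ∀ n, (couplings L (μn n) μ).Nonempty)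
    (hTL : Tendsto (fun n => dTL L q (μn n) μ (fn n) f) atTop (𝓝 0)) :
    ∃ π : ℕ → Measure (AddCircle L × AddCircle L), (∀ n, π n ∈ couplings L (μn n) μ) ∧
      Tendsto (fun n => tlCost L q (fn n) f (π n)) atTop (𝓝 0) := by
  have hπ : ∀ n, ∃ π ∈ couplings L (μn n) μ,
      tlCost L q (fn n) f π ^ (1 / q) < dTL L q (μn n) μ (fn n) f + 1 / (n + 1) := by
    intro n
    obtain ⟨π₀, hπ₀⟩ := hne n
    obtain ⟨_, ⟨π, hπ, rfl⟩, hlt⟩ := Real.lt_sInf_add_pos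
      (s := {r | ∃ π ∈ couplings L (μn n) μ, r = tlCost L q (fn n) f π ^ (1 / q)})
      ⟨_, π₀, hπ₀, rfl⟩ (by positivity : (0 : ℝ) < 1 / (n + 1))
    exact ⟨π, hπ, hlt⟩
  choose π hπ hlt using hπ
  refine ⟨π, hπ, ?_⟩
  have hroot : Tendsto (fun n => tlCost L q (fn n) f (π n) ^ (1 / q)) atTop (𝓝 0) :=
    squeeze_zero (fun n => by positivity [tlCost_nonneg (q := q) (fn n) f (π n)])
      (fun n => (hlt n).le)
      (by simpa using hTL.add tendsto_one_div_add_atTop_nhds_zero_nat)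
  simpa [← Real.rpow_mul (tlCost_nonneg _ _ _), Real.zero_rpow hq.ne', hq.ne'] using
    hroot.rpow_const (p := q) (Or.inr hq.le)

theorem AddCircle.memLp_of_aestronglyMeasurable [Fact (0 < L)] {β : Type*} [MeasurableSpace β]
    {ρ : Measure β} [IsFiniteMeasure ρ] {F : β → AddCircle L} (hF : AEStronglyMeasurable F ρ)
    (p : ℝ≥0∞) : MemLp F p ρ :=
  .of_bound hF (|L| / 2) (.of_forall fun _ => norm_le_half_period L (Fact.out : 0 < L).ne')

theorem memLp_fst_sub_snd [Fact (0 < L)] (p : ℝ≥0∞) [IsFiniteMeasure π] :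
    MemLp (fun z : AddCircle L × AddCircle L => z.1 - z.2) p π :=
  AddCircle.memLp_of_aestronglyMeasurable (by fun_prop) p

theorem memLp_comp_fst_sub_comp_snd {p : ℝ≥0∞} (hπ : π ∈ couplings L μ ν)
    {f g : AddCircle L → ℝ} (hf : MemLp f p μ) (hg : MemLp g p ν) :
    MemLp (fun z : AddCircle L × AddCircle L => f z.1 - g z.2) p π := by
  rw [← hπ.2.1] at hf
  rw [← hπ.2.2] at hg
  exact (hf.comp_of_map measurable_fst.aemeasurable).sub
    (hg.comp_of_map measurable_snd.aemeasurable)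

theorem tlCost_eq_add [Fact (0 < L)] (hq : 0 < q) (hπ : π ∈ couplings L μ ν)
    {f g : AddCircle L → ℝ} (hf : MemLp f (ENNReal.ofReal q) μ)
    (hg : MemLp g (ENNReal.ofReal q) ν) :
    tlCost L q f g π =
      ∫ z, ‖z.1 - z.2‖ ^ q ∂π + ∫ z, ‖f z.1 - g z.2‖ ^ q ∂π := by
  have := hπ.1
  have hint {E : Type} [NormedAddCommGroup E] {F : AddCircle L × AddCircle L → E}
      (hF : MemLp F (ENNReal.ofReal q) π) : Integrable (fun z => ‖F z‖ ^ q) π := by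
    have := hF.integrable_norm_rpow (by simpa using hq) ENNReal.ofReal_ne_top
    rwa [ENNReal.toReal_ofReal hq.le] at this
  unfold tlCost
  simp only [← Real.norm_eq_abs]
  exact integral_add (hint (memLp_fst_sub_snd _)) (hint (memLp_comp_fst_sub_comp_snd hπ hf hg))

theorem tendsto_eLpNorm_of_tendsto_tlCost [Fact (0 < L)] (hq : 0 < q)
    {μn : ℕ → Measure (AddCircle L)} {π : ℕ → Measure (AddCircle L × AddCircle L)}
    (hπ : ∀ n, π n ∈ couplings L (μn n) μ)
    {f : AddCircle L → ℝ} {fn : ℕ → AddCircle L → ℝ}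
    (hfn : ∀ n, MemLp (fn n) (ENNReal.ofReal q) (μn n)) (hf : MemLp f (ENNReal.ofReal q) μ)
    (h : Tendsto (fun n => tlCost L q (fn n) f (π n)) atTop (𝓝 0)) :
    Tendsto (fun n => eLpNorm (fun z : AddCircle L × AddCircle L => z.1 - z.2)
        (ENNReal.ofReal q) (π n)) atTop (𝓝 0) ∧
      Tendsto (fun n => eLpNorm (fun z : AddCircle L × AddCircle L => fn n z.1 - f z.2)
        (ENNReal.ofReal q) (π n)) atTop (𝓝 0) := by
  have := fun n => (hπ n).1
  rw [tendsto_eLpNorm_nhds_zero_iff_integral_norm_rpow hq fun n => memLp_fst_sub_snd _,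
    tendsto_eLpNorm_nhds_zero_iff_integral_norm_rpow hq
      fun n => memLp_comp_fst_sub_comp_snd (hπ n) (hfn n) hf]
  simp only [tlCost_eq_add hq (hπ _) (hfn _) hf] at h
  exact ⟨squeeze_zero (fun n => integral_nonneg fun _ => by positivity)
      (fun n => le_add_of_nonneg_right (integral_nonneg fun _ => by positivity)) h,
    squeeze_zero (fun n => integral_nonneg fun _ => by positivity)
      (fun n => le_add_of_nonneg_left (integral_nonneg fun _ => by positivity)) h⟩

end TLCost

section Stagnating

variable {X E : Type*} [MetricSpace X] [CompactSpace X] [MeasurableSpace X] [BorelSpace X]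
  [NormedAddCommGroup E] [NormedSpace ℝ E]

theorem tendsto_eLpNorm_sub_comp_of_couplings {p : ℝ≥0∞} (hp : 1 ≤ p) (hp_top : p ≠ ∞)
    {μ : Measure X} [IsProbabilityMeasure μ] {T : ℕ → X → X} (hT : ∀ n, Measurable (T n))
    {π : ℕ → Measure (X × X)} [∀ n, IsProbabilityMeasure (π n)]
    (hπ₁ : ∀ n, (π n).map Prod.fst = μ.map (T n)) (hπ₂ : ∀ n, (π n).map Prod.snd = μ)
    {f : X → E} {fn : ℕ → X → E} (hf : MemLp f p μ)
    (hfn : ∀ n, AEStronglyMeasurable (fn n) (μ.map (T n)))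
    (hT_stag : Tendsto (fun n => eLpNorm (fun x => dist x (T n x)) p μ) atTop (𝓝 0))
    (hπ_stag : Tendsto (fun n => eLpNorm (fun z : X × X => dist z.1 z.2) p (π n)) atTop (𝓝 0))
    (hπ_gap : Tendsto (fun n => eLpNorm (fun z : X × X => fn n z.1 - f z.2) p (π n))
      atTop (𝓝 0)) :
    Tendsto (fun n => eLpNorm (fun x => f x - fn n (T n x)) p μ) atTop (𝓝 0) := by
  refine ENNReal.tendsto_nhds_zero_of_forall_le_ofReal_add fun ε hε => ?_
  obtain ⟨g, hfg, -⟩ := hf.exists_boundedContinuous_eLpNorm_sub_le hp_top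
    (ε := ENNReal.ofReal ε / 2) (by simpa using hε)
  have hg := CompactSpace.uniformContinuous_of_continuous g.continuous
  have hgT := tendsto_eLpNorm_comp_sub_comp hp g hg (u := fun _ x => x) (v := T)
    (fun n => (measurable_id.dist (hT n)).aestronglyMeasurable) hT_stag
  have hgπ := tendsto_eLpNorm_comp_sub_comp hp g hg (ν := π)
    (u := fun _ z => z.1) (v := fun _ z => z.2)
    (fun n => (continuous_fst.dist continuous_snd).aestronglyMeasurable) hπ_stag
  refine ⟨fun n => eLpNorm (fun x => g x - g (T n x)) p μ +
      eLpNorm (fun z => g z.1 - g z.2) p (π n) + eLpNorm (fun z => fn n z.1 - f z.2) p (π n),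
    by simpa using (hgT.add hgπ).add hπ_gap, .of_forall fun n => ?_⟩
  calc _ ≤ _ := eLpNorm_sub_comp_le_of_coupling hp (hT n) (hπ₁ n) (hπ₂ n) hf.1
        g.continuous.stronglyMeasurable (hfn n)
    _ ≤ 2 * (ENNReal.ofReal ε / 2) + _ + _ + _ := by gcongr; exact hfg
    _ = _ := by rw [ENNReal.mul_div_cancel two_ne_zero ENNReal.ofNat_ne_top]; ring

end Stagnating

theorem stmt_4_general (L q : ℝ) [Fact (0 < L)] (hq : 1 ≤ q)
    (μ : Measure (AddCircle L)) (μn : ℕ → Measure (AddCircle L))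
    (f : AddCircle L → ℝ) (fn : ℕ → AddCircle L → ℝ)
    (hμ : IsProbabilityMeasure μ)
    (hf : MemLp f (ENNReal.ofReal q) μ)
    (hfn : ∀ n, MemLp (fn n) (ENNReal.ofReal q) (μn n))
    (hTL : Tendsto (fun n => dTL L q (μn n) μ (fn n) f) atTop (𝓝 0)) :
    ∀ T : ℕ → AddCircle L → AddCircle L,
      (∀ n, Measurable (T n)) →
      (∀ n, μ.map (T n) = μn n) →
      Tendsto (fun n => ∫ x, ‖x - T n x‖ ^ q ∂μ) atTop (𝓝 0) →
      Tendsto (fun n => ∫ x, |f x - fn n (T n x)| ^ q ∂μ) atTop (𝓝 0) := by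
  intro T hT hTμ hT_stag
  have hq0 : 0 < q := zero_lt_one.trans_le hq
  have hfnT : ∀ n, MemLp (fun x => fn n (T n x)) (ENNReal.ofReal q) μ := fun n =>
    ((hTμ n).symm ▸ hfn n).comp_of_map (hT n).aemeasurable
  obtain ⟨π, hπ, hcost⟩ := exists_mem_couplings_tendsto_tlCost hq0
    (fun n => ⟨_, hTμ n ▸ map_prodMk_mem_couplings (hT n)⟩) hTL
  have := fun n => (hπ n).1
  obtain ⟨hπ_stag, hπ_gap⟩ := tendsto_eLpNorm_of_tendsto_tlCost hq0 hπ hfn hf hcost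
  replace hT_stag := (tendsto_eLpNorm_nhds_zero_iff_integral_norm_rpow hq0
    (F := fun n x => x - T n x) fun n => AddCircle.memLp_of_aestronglyMeasurable
      (measurable_id.sub (hT n)).aestronglyMeasurable _).2 hT_stag
  have key := tendsto_eLpNorm_sub_comp_of_couplings (by simpa using hq) ENNReal.ofReal_ne_top hT
    (fun n => (hπ n).2.1.trans (hTμ n).symm) (fun n => (hπ n).2.2) hf
    (fun n => (hTμ n).symm ▸ (hfn n).1) (by simpa [dist_eq_norm, eLpNorm_norm] using hT_stag)
    (by simpa [dist_eq_norm, eLpNorm_norm] using hπ_stag) hπ_gap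
  simpa only [Pi.sub_apply, Real.norm_eq_abs] using
    (tendsto_eLpNorm_nhds_zero_iff_integral_norm_rpow hq0 fun n => hf.sub (hfnT n)).1 key

/-- If `(μ_n,f_n) → (μ,f)` in `TL^q` with `μ` absolutely continuous w.r.t. Lebesgue
measure, then for every stagnating sequence of transportation maps `T_n` with
`(T_n)_# μ = μ_n` one has `∫ |f - f_n ∘ T_n|^q dμ → 0`. -/
theorem stmt_4 (L q : ℝ) [Fact (0 < L)] (hq : 1 ≤ q)
    (μ : Measure (AddCircle L)) (μn : ℕ → Measure (AddCircle L))
    (f : AddCircle L → ℝ) (fn : ℕ → AddCircle L → ℝ)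
    (hμ : IsProbabilityMeasure μ) (hμn : ∀ n, IsProbabilityMeasure (μn n))
    (hf : MemLp f (ENNReal.ofReal q) μ)
    (hfn : ∀ n, MemLp (fn n) (ENNReal.ofReal q) (μn n))
    (hac : μ ≪ MeasureTheory.volume)
    (hTL : Tendsto (fun n => dTL L q (μn n) μ (fn n) f) atTop (𝓝 0)) :
    ∀ T : ℕ → AddCircle L → AddCircle L,
      (∀ n, Measurable (T n)) →
      (∀ n, μ.map (T n) = μn n) →
      Tendsto (fun n => ∫ x, ‖x - T n x‖ ^ q ∂μ) atTop (𝓝 0) →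
      Tendsto (fun n => ∫ x, |f x - fn n (T n x)| ^ q ∂μ) atTop (𝓝 0) :=
  stmt_4_general L q hq μ μn f fn hμ hf hfn hTL
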